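/- Let X be a finite square-free left cycle set of multipermutational level k, z ∉ X, and α ∈ Aut(X) such that there exists x ∈ X with σ_{[k-1]}(x) ≠ σ_{[k-1]}(α(x)). Then the one-sided extension (X ∪ {z}, ∘), where x∘y = x·y for x,y ∈ X, x∘z = z, and z∘y = α(y), is a square-free left cycle set of multipermutational level k+1. -/

import Mathlib

/-- A left cycle set: each left multiplication `op x` is bijective and the
cycloid identity `(x·y)·(x·z) = (y·x)·(y·z)` holds. -/
def IsCycleSet {X : Type*} (op : X → X → X) : Prop :=
  (∀ x, Function.Bijective (op x)) ∧
  ∀ x y z, op (op x y) (op x z) = op (op y x) (op y z)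

/-- Square-free: `x·x = x` for all `x`. -/
def IsSquareFree {X : Type*} (op : X → X → X) : Prop := ∀ x, op x x = x

/-- Non-degenerate: the squaring map `x ↦ x·x` is bijective. -/
def IsNonDeg {X : Type*} (op : X → X → X) : Prop :=
  Function.Bijective (fun x => op x x)

/-- An automorphism of a left cycle set. -/
def IsAut {X : Type*} (op : X → X → X) (α : X → X) : Prop :=
  Function.Bijective α ∧ ∀ x y, α (op x y) = op (α x) (α y)

/-- Irretractable: the map `x ↦ σ_x` is injective. -/
def IsIrretractable {X : Type*} (op : X → X → X) : Prop := Function.Injective op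

/-- `retRel op n x y` says `σ_{[n]}(x) = σ_{[n]}(y)`, i.e. `x` and `y` have the same
image in the `n`-th retraction `σⁿ(X)`. -/
def retRel {X : Type*} (op : X → X → X) : ℕ → X → X → Prop
  | 0 => Eq
  | n + 1 => fun x y => ∀ z, retRel op n (op x z) (op y z)

/-- `X` has multipermutational level `m`: `m` is minimal with `|σᵐ(X)| = 1`. -/
def HasMPL {X : Type*} (op : X → X → X) (m : ℕ) : Prop :=
  (∀ x y, retRel op m x y) ∧ ∀ k < m, ¬ (∀ x y, retRel op k x y)

/-- The solution `r(x,y) = (λ_x(y), λ_x(y)·x)` associated to a cycle set,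
where `lam x` is the inverse of `op x`. -/
def rmap {X : Type*} (op lam : X → X → X) : X × X → X × X :=
  fun p => (lam p.1 p.2, op (lam p.1 p.2) p.1)

/-- `r × id`. -/
def r1map {X : Type*} (r : X × X → X × X) : X × X × X → X × X × X :=
  fun p => ((r (p.1, p.2.1)).1, ((r (p.1, p.2.1)).2, p.2.2))

/-- `id × r`. -/
def r2map {X : Type*} (r : X × X → X × X) : X × X × X → X × X × X :=
  fun p => (p.1, r p.2)

/-- One-sided extension of a cycle set by an automorphism `α`, with `none` as the
new element `z`: `x∘y = x·y`, `x∘z = z`, `z∘y = α(y)`. -/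
def extOp {X : Type*} (op : X → X → X) (α : X → X) :
    Option X → Option X → Option X
  | some x, some y => some (op x y)
  | _, none => none
  | none, some y => some (α y)

/-- The dynamical extension `X × ℤ/2ℤ` with `(x,s)·(y,t) = (x·y, t + 1 - δ_{x,y})`. -/
def doubleOp {X : Type*} [DecidableEq X] (op : X → X → X) :
    X × ZMod 2 → X × ZMod 2 → X × ZMod 2 :=
  fun p q => (op p.1 q.1, if p.1 = q.1 then q.2 else q.2 + 1)

/-- The Bachiller–Cedó–Jespers–Okniński operation on `A × B × I`. -/
def bcjoOp {A B I : Type*} [AddCommGroup A] [AddCommGroup B] [DecidableEq I]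
    (φ₁ : A → B) (φ₂ : B →+ A) : A × B × I → A × B × I → A × B × I :=
  fun p q =>
    if p.2.2 = q.2.2 then (q.1, q.2.1 - φ₁ (p.1 - q.1), q.2.2)
    else (q.1 - φ₂ p.2.1, q.2.1, q.2.2)

/-- One-sided extension of `X` by a cycle set `Y` acting by automorphisms:
`x∘y = x·y` inside `X` and `Y`, `x∘y = y` for `x ∈ X, y ∈ Y`, `y∘x = α(y)(x)`. -/
def sumOp {X Y : Type*} (opX : X → X → X) (opY : Y → Y → Y) (α : Y → X → X) :
    X ⊕ Y → X ⊕ Y → X ⊕ Y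
  | .inl p, .inl q => .inl (opX p q)
  | .inl _, .inr y => .inr y
  | .inr y, .inl q => .inl (α y q)
  | .inr y, .inr y' => .inr (opY y y')

/-- The set of cardinalities of finite square-free non-degenerate cycle sets of
multipermutational level `m`; `N_m` is its infimum. -/
def Nset (m : ℕ) : Set ℕ :=
  {n | ∃ (X : Type) (op : X → X → X), Finite X ∧ IsCycleSet op ∧ IsSquareFree op ∧
        IsNonDeg op ∧ HasMPL op m ∧ Nat.card X = n}

/-- The set of cardinalities of finite square-free cycle sets of level `k` admitting
an automorphism `α` with `σ_{[k-1]}(x) ≠ σ_{[k-1]}(α(x))` for some `x`;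
`N̄_k` is its infimum. -/
def NbarSet (k : ℕ) : Set ℕ :=
  {n | ∃ (X : Type) (op : X → X → X), Finite X ∧ IsCycleSet op ∧ IsSquareFree op ∧
        HasMPL op k ∧ (∃ (α : X → X) (x : X), IsAut op α ∧ ¬ retRel op (k - 1) x (α x)) ∧
        Nat.card X = n}


/-!
The extension acts on `X` by `op` and `α`, both bijective and compatible with the cycloid
identity, so it is again a square-free cycle set, and its relations `σ_{[n]}` restrict to
those of `X`. Hence level `k` of `X` forces level at least `k` of the extension, while all
elements become identified one step later. Level exactly `k` is ruled out by `z` and `x`: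
`σ_{[k]}(z) = σ_{[k]}(x)` would give `σ_{[k-1]}(α x) = σ_{[k-1]}(x·x) = σ_{[k-1]}(x)`.
-/

section ExtOp

variable {X : Type*} (op : X → X → X) (α : X → X)

lemma retRel_refl : ∀ n (x : X), retRel op n x x
  | 0, _ => rfl
  | n + 1, _ => fun _ => retRel_refl n _

lemma extOp_some_eq (u : X) : extOp op α (some u) = Option.map (op u) :=
  funext fun b => by cases b <;> rfl

lemma extOp_none_eq : extOp op α none = Option.map α :=
  funext fun b => by cases b <;> rfl

lemma retRel_extOp_some_iff :
    ∀ n (x y : X), retRel (extOp op α) n (some x) (some y) ↔ retRel op n x y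
  | 0, _, _ => Option.some_inj
  | n + 1, x, y => by
    refine ⟨fun h w => (retRel_extOp_some_iff n _ _).1 (h (some w)), fun h c => ?_⟩
    cases c with
    | none => exact retRel_refl _ n _
    | some w => exact (retRel_extOp_some_iff n _ _).2 (h w)

variable {op α}

lemma isCycleSet_extOp (h : IsCycleSet op) (hα : IsAut op α) : IsCycleSet (extOp op α) := by
  refine ⟨fun a => ?_, fun a b c => ?_⟩
  · obtain ⟨f, hf, hfa⟩ : ∃ f : X → X, Function.Bijective f ∧ extOp op α a = Option.map f := by
      cases a with
      | some u => exact ⟨op u, h.1 u, extOp_some_eq op α u⟩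
      | none => exact ⟨α, hα.1, extOp_none_eq op α⟩
    rw [hfa]
    exact (Equiv.optionCongr (Equiv.ofBijective f hf)).bijective
  · cases a <;> cases b <;> cases c <;> simp [extOp, hα.2, h.2]

lemma isSquareFree_extOp (hsf : IsSquareFree op) : IsSquareFree (extOp op α)
  | none => rfl
  | some u => congrArg some (hsf u)

lemma retRel_extOp_succ {n : ℕ} (hall : ∀ x y, retRel op n x y) :
    ∀ a b, retRel (extOp op α) (n + 1) a b := by
  intro a b c
  cases c with
  | none => cases a <;> cases b <;> exact retRel_refl _ n none
  | some w => cases a <;> cases b <;> exact (retRel_extOp_some_iff op α n _ _).2 (hall _ _)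

lemma hasMPL_extOp {m : ℕ} (hmpl : HasMPL op (m + 1)) (hsf : IsSquareFree op) {x : X}
    (hx : ¬ retRel op m x (α x)) : HasMPL (extOp op α) (m + 2) := by
  refine ⟨retRel_extOp_succ hmpl.1, fun j hj hall => ?_⟩
  rcases Nat.lt_succ_iff_lt_or_eq.mp hj with hj | rfl
  · exact hmpl.2 j hj fun u v => (retRel_extOp_some_iff op α j u v).1 (hall (some u) (some v))
  · have hxz : retRel op m (op x x) (α x) :=
      (retRel_extOp_some_iff op α m _ _).1 (hall (some x) none (some x))
    rw [hsf x] at hxz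
    exact hx hxz

end ExtOp

theorem stmt6_general {X : Type*} (op : X → X → X) (k : ℕ)
    (h : IsCycleSet op) (hsf : IsSquareFree op) (hmpl : HasMPL op k)
    (α : X → X) (hα : IsAut op α) (x : X) (hx : ¬ retRel op (k - 1) x (α x)) :
    IsCycleSet (extOp op α) ∧ IsSquareFree (extOp op α) ∧
      HasMPL (extOp op α) (k + 1) := by
  obtain ⟨m, rfl⟩ : ∃ m, k = m + 1 := by
    cases k with
    | zero => exact absurd (hmpl.1 x (α x)) hx
    | succ m => exact ⟨m, rfl⟩
  exact ⟨isCycleSet_extOp h hα, isSquareFree_extOp hsf, hasMPL_extOp hmpl hsf hx⟩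

/-- The one-sided extension of a finite square-free cycle set of
level `k` by an automorphism moving some fiber of `σ_{[k-1]}` has level `k+1`. -/
theorem stmt6 {X : Type*} [Finite X] (op : X → X → X) (k : ℕ)
    (h : IsCycleSet op) (hsf : IsSquareFree op) (hmpl : HasMPL op k)
    (α : X → X) (hα : IsAut op α) (x : X) (hx : ¬ retRel op (k - 1) x (α x)) :
    IsCycleSet (extOp op α) ∧ IsSquareFree (extOp op α) ∧
      HasMPL (extOp op α) (k + 1) :=
  stmt6_general op k h hsf hmpl α hα x hx
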